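/- arXiv:0807.2349 — 3 statements merged into one kernel-verified Lean document; each statement's English description precedes it below -/
import Mathlib

section
/- Let (R_j) be i.i.d. nonnegative random variables with common law μ such that there exist A, c > 0 with μ([x,∞)) ≤ A·exp(-c·√x) for all x ≥ 0. Then the mean M := ∫ x dμ(x) is finite, and for every f > M there exist h(f) > 0 and n(f) such that for all n ≥ n(f), P((R_1 + ⋯ + R_n)/n ≥ f) ≤ exp(-h(f)·√n). -/
open MeasureTheory ProbabilityTheory Filter Real Set
open scoped Topology ENNReal

/-!
Truncate each `R i` at level `n` and apply the Chernoff bound to the truncated sum with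
`t = s / √n`, `s = c / 2`. Since `t · min x n ≤ s √x`, the elementary bound
`eʸ ≤ 1 + y + y² eʸ` gives `E exp (t · min (R i) n) ≤ exp (t M + t² K)` with
`K = ∫ x² exp (s √x) dμ`; `K` is finite because summing the tail bound over unit intervals
makes `exp (a √x)` integrable for every `a < c`. Hence the truncated sum exceeds `f n` with
probability at most `exp (s² K) · exp (-s (f - M) √n)`, while some `R i` exceeds `n` with
probability at most `n A exp (-c √n)`; both are `o (exp (-h √n))` once `h < min c (s (f - M))`.
-/

lemma exp_le_one_add_add_sq_mul_exp {y : ℝ} (hy : 0 ≤ y) : exp y ≤ 1 + y + y ^ 2 * exp y := by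
  have h : exp y ≤ 1 + y * exp y := by
    nlinarith [add_one_le_exp (-y), exp_neg y, mul_inv_cancel₀ (exp_pos y).ne', exp_pos y]
  nlinarith [mul_le_mul_of_nonneg_left h hy]

lemma pow_le_mul_exp_mul_sqrt (m : ℕ) {δ x : ℝ} (hδ : 0 < δ) (hx : 0 ≤ x) :
    x ^ m ≤ (2 * m).factorial / δ ^ (2 * m) * exp (δ * √x) := by
  have h := pow_div_factorial_le_exp _ (mul_nonneg hδ.le (sqrt_nonneg x)) (2 * m)
  rw [mul_pow, pow_mul (√x), sq_sqrt hx, div_le_iff₀ (by positivity)] at h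
  rw [div_mul_eq_mul_div, le_div_iff₀ (by positivity)]
  linarith

lemma summable_exp_neg_mul_sqrt_nat {δ : ℝ} (hδ : 0 < δ) :
    Summable fun k : ℕ => exp (-δ * √k) := by
  refine .of_norm_bounded_eventually_nat
    ((summable_one_div_nat_pow.2 one_lt_two).mul_left ((2 * 2).factorial / δ ^ (2 * 2))) ?_
  filter_upwards [eventually_gt_atTop 0] with k hk
  have hk : (0 : ℝ) < k := by exact_mod_cast hk
  rw [norm_of_nonneg (exp_nonneg _), neg_mul, exp_neg, mul_one_div, le_div_iff₀ (by positivity),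
    inv_mul_le_iff₀ (exp_pos _), mul_comm]
  exact pow_le_mul_exp_mul_sqrt 2 hδ hk.le

lemma tendsto_exp_neg_mul_sqrt_atTop {δ : ℝ} (hδ : 0 < δ) :
    Tendsto (fun x : ℝ => exp (-δ * √x)) atTop (𝓝 0) := by
  simpa only [neg_mul, Function.comp_def] using tendsto_exp_atBot.comp
    (tendsto_neg_atTop_atBot.comp (tendsto_sqrt_atTop.const_mul_atTop hδ))

lemma tendsto_mul_exp_neg_mul_sqrt_atTop {δ : ℝ} (hδ : 0 < δ) :
    Tendsto (fun x : ℝ => x * exp (-δ * √x)) atTop (𝓝 0) := by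
  have h := ((tendsto_pow_mul_exp_neg_atTop_nhds_zero 2).comp
    (tendsto_sqrt_atTop.const_mul_atTop hδ)).const_mul (δ ^ 2)⁻¹
  rw [mul_zero] at h
  refine h.congr' ?_
  filter_upwards [eventually_ge_atTop 0] with x hx
  simp only [Function.comp_apply, mul_pow, sq_sqrt hx, neg_mul]
  field_simp

lemma exists_pos_eventually_mul_exp_neg_mul_sqrt_add_le (A C : ℝ) {c d : ℝ} (hc : 0 < c)
    (hd : 0 < d) : ∃ h > 0, ∀ᶠ n : ℕ in atTop,
      A * n * exp (-c * √n) + C * exp (-d * √n) ≤ exp (-h * √n) := by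
  set h := min c d / 2 with h_def
  have hh : 0 < h := by positivity
  have hch : 0 < c - h := by linarith [min_le_left c d]
  have hdh : 0 < d - h := by linarith [min_le_right c d]
  have hlim := (((tendsto_mul_exp_neg_mul_sqrt_atTop hch).const_mul A).add
    ((tendsto_exp_neg_mul_sqrt_atTop hdh).const_mul C)).comp tendsto_natCast_atTop_atTop
  rw [mul_zero, mul_zero, add_zero] at hlim
  refine ⟨h, hh, ?_⟩
  filter_upwards [hlim.eventually_lt_const one_pos] with n hn
  have hsplit : ∀ b : ℝ, exp (-b * √n) = exp (-h * √n) * exp (-(b - h) * √n) := fun b => by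
    rw [← exp_add]; ring_nf
  calc A * n * exp (-c * √n) + C * exp (-d * √n)
      = exp (-h * √n) * (A * (n * exp (-(c - h) * √n)) + C * exp (-(d - h) * √n)) := by
        rw [hsplit c, hsplit d]; ring
    _ ≤ exp (-h * √n) := mul_le_of_le_one_right (exp_pos _).le hn.le

lemma lintegral_le_tsum_mul_measure_Ici {μ : Measure ℝ} (hnn : ∀ᵐ x ∂μ, 0 ≤ x)
    {g : ℝ → ℝ≥0∞} (hg : MonotoneOn g (Ici 0)) :
    ∫⁻ x, g x ∂μ ≤ ∑' k : ℕ, g (k + 1) * μ (Ici (k : ℝ)) := by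
  have hcover : Ici (0 : ℝ) ⊆ ⋃ k : ℕ, Ico (k : ℝ) (k + 1) := fun x hx =>
    mem_iUnion.2 ⟨⌊x⌋₊, Nat.floor_le hx, Nat.lt_floor_add_one x⟩
  calc ∫⁻ x, g x ∂μ = ∫⁻ x in Ici 0, g x ∂μ := by
        rw [Measure.restrict_eq_self_of_ae_mem (s := Ici 0) hnn]
    _ ≤ ∫⁻ x in ⋃ k : ℕ, Ico (k : ℝ) (k + 1), g x ∂μ := lintegral_mono_set hcover
    _ ≤ ∑' k : ℕ, ∫⁻ x in Ico (k : ℝ) (k + 1), g x ∂μ := lintegral_iUnion_le _ _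
    _ ≤ ∑' k : ℕ, ∫⁻ _ in Ico (k : ℝ) (k + 1), g (k + 1) ∂μ := by
        refine ENNReal.tsum_le_tsum fun k => setLIntegral_mono measurable_const fun x hx => ?_
        exact hg ((Nat.cast_nonneg k).trans hx.1) (by simp; positivity) hx.2.le
    _ ≤ ∑' k : ℕ, g (k + 1) * μ (Ici (k : ℝ)) := by
        refine ENNReal.tsum_le_tsum fun k => ?_
        rw [setLIntegral_const]
        gcongr
        exact Ico_subset_Ici_self

section ExponentialMoments

variable {μ : Measure ℝ} {A c : ℝ} (hnn : ∀ᵐ x ∂μ, 0 ≤ x)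
  (htail : ∀ x : ℝ, 0 ≤ x → μ (Ici x) ≤ ENNReal.ofReal (A * exp (-c * √x)))
include hnn htail

theorem integrable_exp_mul_sqrt_of_tail {a : ℝ} (ha₀ : 0 ≤ a) (ha : a < c) :
    Integrable (fun x => exp (a * √x)) μ := by
  refine ⟨by fun_prop, ?_⟩
  rw [hasFiniteIntegral_iff_ofReal (.of_forall fun x => (exp_pos _).le)]
  have hmono : MonotoneOn (fun x => ENNReal.ofReal (exp (a * √x))) (Ici 0) :=
    fun x _ y _ hxy => by simp only; gcongr
  refine (lintegral_le_tsum_mul_measure_Ici hnn hmono).trans_lt ?_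
  have hsum := (summable_exp_neg_mul_sqrt_nat (sub_pos.2 ha)).mul_left (A * exp a)
  refine lt_of_le_of_lt (ENNReal.tsum_le_tsum fun k => ?_) hsum.tsum_ofReal_lt_top
  have hk : (0 : ℝ) ≤ k := Nat.cast_nonneg k
  have hroot : √((k : ℝ) + 1) ≤ √k + 1 := by
    rw [sqrt_le_left (by positivity)]
    nlinarith [sq_sqrt hk, sqrt_nonneg (k : ℝ)]
  calc ENNReal.ofReal (exp (a * √((k : ℝ) + 1))) * μ (Ici (k : ℝ))
      ≤ ENNReal.ofReal (exp (a * (√k + 1))) * ENNReal.ofReal (A * exp (-c * √k)) := by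
        gcongr
        exact htail k hk
    _ = ENNReal.ofReal (A * exp a * exp (-(c - a) * √k)) := by
        rw [← ENNReal.ofReal_mul (exp_pos _).le]
        congr 1
        rw [mul_left_comm, mul_assoc, ← exp_add, ← exp_add]
        ring_nf

theorem integrable_pow_mul_exp_mul_sqrt_of_tail (m : ℕ) {a : ℝ} (ha₀ : 0 ≤ a) (ha : a < c) :
    Integrable (fun x => x ^ m * exp (a * √x)) μ := by
  set δ := (c - a) / 2
  have hδ : 0 < δ := by simp only [δ]; linarith
  refine ((integrable_exp_mul_sqrt_of_tail hnn htail (a := a + δ) (by positivity)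
    (by simp only [δ]; linarith)).const_mul ((2 * m).factorial / δ ^ (2 * m))).mono'
    (by fun_prop) ?_
  filter_upwards [hnn] with x hx
  rw [norm_of_nonneg (by positivity), add_mul, exp_add, ← mul_assoc, mul_right_comm]
  gcongr
  exact pow_le_mul_exp_mul_sqrt m hδ hx

end ExponentialMoments

lemma min_le_sqrt_mul_sqrt {x L : ℝ} (hx : 0 ≤ x) (hL : 0 ≤ L) : min x L ≤ √x * √L := by
  rw [← sqrt_mul hx, le_sqrt (le_min hx hL) (mul_nonneg hx hL)]
  nlinarith [min_le_left x L, min_le_right x L, le_min hx hL]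

lemma exp_mul_min_le {x t L s : ℝ} (hx : 0 ≤ x) (ht : 0 ≤ t) (hL : 0 ≤ L) (hs : t * √L ≤ s) :
    exp (t * min x L) ≤ 1 + t * x + t ^ 2 * (x ^ 2 * exp (s * √x)) := by
  have hmin : 0 ≤ min x L := le_min hx hL
  have hexp : t * min x L ≤ s * √x :=
    calc t * min x L ≤ t * (√x * √L) := by gcongr; exact min_le_sqrt_mul_sqrt hx hL
      _ = t * √L * √x := by ring
      _ ≤ s * √x := by gcongr
  calc exp (t * min x L) ≤ 1 + t * min x L + (t * min x L) ^ 2 * exp (t * min x L) :=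
        exp_le_one_add_add_sq_mul_exp (by positivity)
    _ ≤ 1 + t * x + t ^ 2 * (x ^ 2 * exp (s * √x)) := by
        rw [mul_pow, mul_assoc]
        gcongr <;> exact min_le_left x L

lemma integral_exp_mul_min_le {μ : Measure ℝ} [IsProbabilityMeasure μ] (hnn : ∀ᵐ x ∂μ, 0 ≤ x)
    {t L s : ℝ} (ht : 0 ≤ t) (hL : 0 ≤ L) (hs : t * √L ≤ s)
    (h₁ : Integrable (fun x => x) μ) (h₂ : Integrable (fun x => x ^ 2 * exp (s * √x)) μ) :
    ∫ x, exp (t * min x L) ∂μ ≤ 1 + t * ∫ x, x ∂μ + t ^ 2 * ∫ x, x ^ 2 * exp (s * √x) ∂μ := by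
  have hbdd : Integrable (fun x => exp (t * min x L)) μ :=
    (integrable_const (exp (t * L))).mono' (by fun_prop) (.of_forall fun x => by
      rw [norm_of_nonneg (exp_pos _).le]; gcongr; exact min_le_right x L)
  have hlin : Integrable (fun x => 1 + t * x) μ := (integrable_const 1).add (h₁.const_mul t)
  calc ∫ x, exp (t * min x L) ∂μ ≤ ∫ x, (1 + t * x + t ^ 2 * (x ^ 2 * exp (s * √x))) ∂μ :=
        integral_mono_ae hbdd (hlin.add (h₂.const_mul _))
          (by filter_upwards [hnn] with x hx using exp_mul_min_le hx ht hL hs)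
    _ = 1 + t * ∫ x, x ∂μ + t ^ 2 * ∫ x, x ^ 2 * exp (s * √x) ∂μ := by
        rw [integral_add hlin (h₂.const_mul _), integral_add (integrable_const 1) (h₁.const_mul t),
          integral_const_mul, integral_const_mul]
        simp

lemma mgf_min_le_exp {Ω : Type*} [MeasurableSpace Ω] {P : Measure Ω} {X : Ω → ℝ}
    {μ : Measure ℝ} [IsProbabilityMeasure μ] (hX : Measurable X) (hlaw : P.map X = μ)
    (hnn : ∀ᵐ x ∂μ, 0 ≤ x) {t L s : ℝ} (ht : 0 ≤ t) (hL : 0 ≤ L) (hs : t * √L ≤ s)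
    (h₁ : Integrable (fun x => x) μ) (h₂ : Integrable (fun x => x ^ 2 * exp (s * √x)) μ) :
    mgf (fun ω => min (X ω) L) P t ≤
      exp (t * ∫ x, x ∂μ + t ^ 2 * ∫ x, x ^ 2 * exp (s * √x) ∂μ) :=
  calc mgf (fun ω => min (X ω) L) P t = ∫ x, exp (t * min x L) ∂μ := by
        rw [mgf, ← hlaw, integral_map hX.aemeasurable (by fun_prop)]
    _ ≤ 1 + t * ∫ x, x ∂μ + t ^ 2 * ∫ x, x ^ 2 * exp (s * √x) ∂μ :=
        integral_exp_mul_min_le hnn ht hL hs h₁ h₂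
    _ ≤ exp (t * ∫ x, x ∂μ + t ^ 2 * ∫ x, x ^ 2 * exp (s * √x) ∂μ) := by
        linarith [add_one_le_exp (t * ∫ x, x ∂μ + t ^ 2 * ∫ x, x ^ 2 * exp (s * √x) ∂μ)]

lemma measureReal_sum_ge_le_of_mgf_le {ι Ω : Type*} [MeasurableSpace Ω] {P : Measure Ω}
    [IsProbabilityMeasure P] {X : ι → Ω → ℝ} (hindep : iIndepFun X P)
    (hmeas : ∀ i, Measurable (X i)) {t m : ℝ} (ht : 0 ≤ t)
    (hint : ∀ i, Integrable (fun ω => exp (t * X i ω)) P) (hmgf : ∀ i, mgf (X i) P t ≤ exp m)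
    (s : Finset ι) (a : ℝ) :
    P.real {ω | a ≤ ∑ i ∈ s, X i ω} ≤ exp (-t * a + s.card * m) := by
  have hchernoff := measure_ge_le_exp_mul_mgf a ht
    (hindep.integrable_exp_mul_sum hmeas fun i _ => hint i) (X := ∑ i ∈ s, X i)
  simp only [Finset.sum_apply] at hchernoff
  calc P.real {ω | a ≤ ∑ i ∈ s, X i ω} ≤ exp (-t * a) * ∏ i ∈ s, mgf (X i) P t := by
        rwa [← hindep.mgf_sum hmeas]
    _ ≤ exp (-t * a) * exp m ^ s.card := by
        gcongr
        exact (Finset.prod_le_prod (fun i _ => mgf_nonneg) fun i _ => hmgf i).trans_eq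
          (Finset.prod_const _)
    _ = exp (-t * a + s.card * m) := by rw [← exp_nat_mul, ← exp_add]

lemma setOf_le_sum_subset_union {ι Ω : Type*} (X : ι → Ω → ℝ) (s : Finset ι) (a L : ℝ) :
    {ω | a ≤ ∑ i ∈ s, X i ω} ⊆
      (⋃ i ∈ s, {ω | L < X i ω}) ∪ {ω | a ≤ ∑ i ∈ s, min (X i ω) L} := by
  intro ω hω
  by_cases hbig : ∃ i ∈ s, L < X i ω
  · obtain ⟨i, hi, hlt⟩ := hbig
    exact Or.inl (mem_biUnion hi hlt)
  · right
    have hbdd : ∀ i ∈ s, X i ω ≤ L := by simpa using hbig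
    simpa [Finset.sum_congr rfl fun i hi => min_eq_left (hbdd i hi)] using hω

theorem measure_mean_ge_le {Ω : Type*} [MeasurableSpace Ω] {P : Measure Ω}
    [IsProbabilityMeasure P] {R : ℕ → Ω → ℝ} {μ : Measure ℝ} [IsProbabilityMeasure μ]
    (hmeas : ∀ j, Measurable (R j)) (hindep : iIndepFun R P) (hlaw : ∀ j, P.map (R j) = μ)
    (hnn : ∀ᵐ x ∂μ, 0 ≤ x) {s : ℝ} (hs : 0 ≤ s) (h₁ : Integrable (fun x => x) μ)
    (h₂ : Integrable (fun x => x ^ 2 * exp (s * √x)) μ) (f : ℝ) {n : ℕ} (hn : 0 < n) :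
    P {ω | f ≤ (∑ i ∈ Finset.range n, R i ω) / n} ≤ n * μ (Ioi n) +
      ENNReal.ofReal (exp (s ^ 2 * ∫ x, x ^ 2 * exp (s * √x) ∂μ) *
        exp (-(s * (f - ∫ x, x ∂μ)) * √n)) := by
  set M := ∫ x, x ∂μ
  set K := ∫ x, x ^ 2 * exp (s * √x) ∂μ
  have hn' : (0 : ℝ) < n := by exact_mod_cast hn
  set t := s / √n
  have ht : 0 ≤ t := by positivity
  have htn : t * √n = s := div_mul_cancel₀ _ (sqrt_pos.2 hn').ne'
  set X : ℕ → Ω → ℝ := fun i ω => min (R i ω) n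
  have hXmeas : ∀ i, Measurable (X i) := fun i => (hmeas i).min measurable_const
  have hXint : ∀ i, Integrable (fun ω => exp (t * X i ω)) P := fun i =>
    (integrable_const (exp (t * n))).mono' (by fun_prop) (.of_forall fun ω => by
      rw [norm_of_nonneg (exp_pos _).le]; gcongr; exact min_le_right _ _)
  have hXmgf : ∀ i, mgf (X i) P t ≤ exp (t * M + t ^ 2 * K) := fun i =>
    mgf_min_le_exp (hmeas i) (hlaw i) hnn ht hn'.le htn.le h₁ h₂
  have hXindep : iIndepFun X P :=
    hindep.comp (fun _ x => min x n) fun _ => measurable_id.min measurable_const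
  have hchernoff :=
    measureReal_sum_ge_le_of_mgf_le hXindep hXmeas ht hXint hXmgf (Finset.range n) (f * n)
  have hexponent : -t * (f * n) + (Finset.range n).card * (t * M + t ^ 2 * K) =
      s ^ 2 * K + -(s * (f - M)) * √n := by
    rw [Finset.card_range, ← htn]
    linear_combination (t * (f - M) - t ^ 2 * K) * sq_sqrt hn'.le
  have htruncated : ∀ i, P {ω | (n : ℝ) < R i ω} = μ (Ioi n) := fun i => by
    rw [← hlaw i, Measure.map_apply (hmeas i) measurableSet_Ioi]
    rfl
  calc P {ω | f ≤ (∑ i ∈ Finset.range n, R i ω) / n}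
      = P {ω | f * n ≤ ∑ i ∈ Finset.range n, R i ω} := by simp_rw [le_div_iff₀ hn']
    _ ≤ P (⋃ i ∈ Finset.range n, {ω | (n : ℝ) < R i ω}) +
          P {ω | f * n ≤ ∑ i ∈ Finset.range n, X i ω} :=
        (measure_mono (setOf_le_sum_subset_union R _ _ _)).trans (measure_union_le _ _)
    _ ≤ ∑ i ∈ Finset.range n, P {ω | (n : ℝ) < R i ω} +
          ENNReal.ofReal (P.real {ω | f * n ≤ ∑ i ∈ Finset.range n, X i ω}) :=
        add_le_add (measure_biUnion_finset_le _ _) (ofReal_measureReal).ge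
    _ ≤ n * μ (Ioi n) + ENNReal.ofReal (exp (s ^ 2 * K + -(s * (f - M)) * √n)) := by
        simp_rw [htruncated, Finset.sum_const, Finset.card_range, nsmul_eq_mul, ← hexponent]
        gcongr
    _ = n * μ (Ioi n) + ENNReal.ofReal (exp (s ^ 2 * K) * exp (-(s * (f - M)) * √n)) := by
        rw [exp_add]

/-- Large deviations upper bound for i.i.d. nonnegative random variables with
stretched-exponential tails of exponent 1/2: the mean `M = ∫ x dμ` is finite, and for
every `f > M` there are `h(f) > 0` and `n(f)` such that for `n ≥ n(f)`,
`P((R_1 + ⋯ + R_n)/n ≥ f) ≤ exp(-h(f) √n)`. -/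
theorem ldp_sqrt_tails
    {Ω : Type} [MeasurableSpace Ω] (P : Measure Ω) [IsProbabilityMeasure P]
    (R : ℕ → Ω → ℝ) (μ : Measure ℝ)
    (hmeas : ∀ j, Measurable (R j))
    (hindep : iIndepFun R P)
    (hlaw : ∀ j, Measure.map (R j) P = μ)
    (hnonneg : ∀ j ω, 0 ≤ R j ω)
    (A c : ℝ) (hA : 0 < A) (hc : 0 < c)
    (htail : ∀ x : ℝ, 0 ≤ x →
      μ (Set.Ici x) ≤ ENNReal.ofReal (A * Real.exp (-c * Real.sqrt x))) :
    Integrable (fun x => x) μ ∧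
      ∀ f : ℝ, (∫ x, x ∂μ) < f →
        ∃ h : ℝ, 0 < h ∧ ∃ N : ℕ, ∀ n : ℕ, N ≤ n →
          P {ω | f ≤ (∑ i ∈ Finset.range n, R i ω) / n} ≤
            ENNReal.ofReal (Real.exp (-h * Real.sqrt n)) := by
  have : IsProbabilityMeasure μ := hlaw 0 ▸ Measure.isProbabilityMeasure_map (hmeas 0).aemeasurable
  have hnn : ∀ᵐ x ∂μ, 0 ≤ x := hlaw 0 ▸
    (ae_map_iff (hmeas 0).aemeasurable measurableSet_Ici).2 (.of_forall (hnonneg 0))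
  have h₁ : Integrable (fun x => x) μ := by
    simpa using integrable_pow_mul_exp_mul_sqrt_of_tail hnn htail 1 le_rfl hc
  have h₂ := integrable_pow_mul_exp_mul_sqrt_of_tail hnn htail 2 (by positivity) (half_lt_self hc)
  refine ⟨h₁, fun f hf => ?_⟩
  set M := ∫ x, x ∂μ
  set K := ∫ x, x ^ 2 * exp (c / 2 * √x) ∂μ
  obtain ⟨h, hh, hev⟩ := exists_pos_eventually_mul_exp_neg_mul_sqrt_add_le A
    (exp ((c / 2) ^ 2 * K)) hc (mul_pos (half_pos hc) (sub_pos.2 hf))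
  obtain ⟨N, hN⟩ := eventually_atTop.1 (hev.and (eventually_gt_atTop 0))
  refine ⟨h, hh, N, fun n hn => ?_⟩
  obtain ⟨hbound, hn⟩ := hN n hn
  calc P {ω | f ≤ (∑ i ∈ Finset.range n, R i ω) / n}
      ≤ n * μ (Ioi n) + ENNReal.ofReal (exp ((c / 2) ^ 2 * K) * exp (-(c / 2 * (f - M)) * √n)) :=
        measure_mean_ge_le hmeas hindep hlaw hnn (half_pos hc).le h₁ h₂ f hn
    _ ≤ n * ENNReal.ofReal (A * exp (-c * √n)) +
          ENNReal.ofReal (exp ((c / 2) ^ 2 * K) * exp (-(c / 2 * (f - M)) * √n)) := by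
        gcongr
        exact (measure_mono Ioi_subset_Ici_self).trans (htail n n.cast_nonneg)
    _ ≤ ENNReal.ofReal (exp (-h * √n)) := by
        rw [← ENNReal.ofReal_natCast, ← ENNReal.ofReal_mul n.cast_nonneg,
          ← ENNReal.ofReal_add (by positivity) (by positivity), ← mul_assoc, mul_comm (n : ℝ)]
        exact ENNReal.ofReal_le_ofReal hbound
end

section
/- Let (a_k)_{k≥1} and (c_k)_{k≥1} be sequences of nonnegative reals with ∑_{k≥1} a_k < 1, c_1 ≤ a_1, and c_m ≤ a_m + ∑_{k=1}^{m-1} a_{m-k} c_k for every m ≥ 2. If 𝒜(t) := ∑_{k≥1} a_k e^{tk} is finite for some t₀ > 0, then 𝒜(t) < 1 for all sufficiently small t > 0, and for all such t, 𝒞(t) := ∑_{k≥1} c_k e^{tk} ≤ 𝒜(t)/(1 - 𝒜(t)). -/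
/-!
Weighting the renewal inequality by `e^{tk}` preserves it, because `e^{tm} = e^{t(m-k)} e^{tk}`.
For a subsolution `c` of the renewal equation `c = a + a ⋆ c`, summing the inequality up to `m`
and exchanging the order of the convolution sum gives `Sₘ ≤ A + A Sₘ`, where `Sₘ = ∑_{k ≤ m} c_k`
and `A = ∑ a_k`; hence `Sₘ ≤ A / (1 - A)` when `A < 1`. Finally `𝒜(t) → ∑ a_k < 1` as `t → 0`
by dominated convergence (dominated by `𝒜(t₀)`), and `𝒜` is monotone in `t`.
-/

open Finset Real Filter Topology

/-- `c` is a subsolution of the renewal equation `c = a + a ⋆ c` on the indices `1, 2, …`. -/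
def IsRenewalSubsolution (a c : ℕ → ℝ) : Prop :=
  ∀ m, 1 ≤ m → c m ≤ a m + ∑ k ∈ Icc 1 (m - 1), a (m - k) * c k

lemma sum_Icc_one_eq_sum_range (f : ℕ → ℝ) (n : ℕ) :
    ∑ i ∈ Icc 1 n, f i = ∑ k ∈ range n, f (k + 1) := by
  rw [← Ico_add_one_right_eq_Icc, sum_Ico_eq_sum_range, add_tsub_cancel_right]
  simp only [add_comm 1]

lemma sum_Icc_convolution_le {f g : ℕ → ℝ} {A : ℝ} (hf : ∀ n, ∑ j ∈ Icc 1 n, f j ≤ A)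
    (hg : ∀ k, 0 ≤ g k) (m : ℕ) :
    ∑ i ∈ Icc 1 m, ∑ k ∈ Icc 1 (i - 1), f (i - k) * g k ≤ A * ∑ k ∈ Icc 1 m, g k := by
  have hmem (i k : ℕ) : i ∈ Icc 1 m ∧ k ∈ Icc 1 (i - 1) ↔ i ∈ Ioc k m ∧ k ∈ Icc 1 m := by
    simp only [mem_Icc, mem_Ioc]
    omega
  rw [sum_comm' hmem, mul_sum]
  refine sum_le_sum fun k _ => ?_
  rw [← sum_mul]
  refine mul_le_mul_of_nonneg_right ?_ (hg k)
  calc ∑ i ∈ Ioc k m, f (i - k) = ∑ j ∈ Icc 1 (m - k), f j := by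
        refine sum_nbij' (· - k) (· + k) ?_ ?_ ?_ ?_ ?_ <;> intro i hi <;>
          simp only [mem_Ioc, mem_Icc] at hi ⊢ <;> omega
    _ ≤ A := hf _

lemma isRenewalSubsolution_of_le {a c : ℕ → ℝ} (h₁ : c 1 ≤ a 1)
    (h : ∀ m, 2 ≤ m → c m ≤ a m + ∑ k ∈ Icc 1 (m - 1), a (m - k) * c k) :
    IsRenewalSubsolution a c := by
  intro m hm
  rcases hm.eq_or_lt with rfl | hm
  · simpa using h₁
  · exact h m hm

namespace IsRenewalSubsolution

variable {a c : ℕ → ℝ}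

lemma mul_pow (h : IsRenewalSubsolution a c) {x : ℝ} (hx : 0 ≤ x) :
    IsRenewalSubsolution (fun k => a k * x ^ k) (fun k => c k * x ^ k) := by
  intro m hm
  calc c m * x ^ m ≤ (a m + ∑ k ∈ Icc 1 (m - 1), a (m - k) * c k) * x ^ m :=
        mul_le_mul_of_nonneg_right (h m hm) (pow_nonneg hx m)
    _ = a m * x ^ m + ∑ k ∈ Icc 1 (m - 1), a (m - k) * x ^ (m - k) * (c k * x ^ k) := by
        rw [add_mul, sum_mul]
        congr 1
        refine sum_congr rfl fun k hk => ?_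
        rw [← pow_sub_mul_pow x (show k ≤ m by simp only [mem_Icc] at hk; omega)]
        ring

lemma mul_exp (h : IsRenewalSubsolution a c) (t : ℝ) :
    IsRenewalSubsolution (fun k => a k * exp (t * k)) (fun k => c k * exp (t * k)) := by
  simpa only [mul_comm t, exp_nat_mul] using h.mul_pow (exp_pos t).le

lemma sum_Icc_le_div (h : IsRenewalSubsolution a c) (hc : ∀ k, 0 ≤ c k) {A : ℝ}
    (ha : ∀ n, ∑ i ∈ Icc 1 n, a i ≤ A) (hA : A < 1) (m : ℕ) :
    ∑ i ∈ Icc 1 m, c i ≤ A / (1 - A) := by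
  have hS : ∑ i ∈ Icc 1 m, c i ≤ A + A * ∑ i ∈ Icc 1 m, c i :=
    calc ∑ i ∈ Icc 1 m, c i ≤ ∑ i ∈ Icc 1 m, (a i + ∑ k ∈ Icc 1 (i - 1), a (i - k) * c k) :=
          sum_le_sum fun i hi => h i (mem_Icc.1 hi).1
      _ = ∑ i ∈ Icc 1 m, a i + ∑ i ∈ Icc 1 m, ∑ k ∈ Icc 1 (i - 1), a (i - k) * c k :=
          sum_add_distrib
      _ ≤ A + A * ∑ i ∈ Icc 1 m, c i := add_le_add (ha m) (sum_Icc_convolution_le ha hc m)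
  rw [le_div_iff₀ (sub_pos.2 hA)]
  linarith

lemma summable_and_tsum_le (h : IsRenewalSubsolution a c) (ha : ∀ k, 0 ≤ a k)
    (hc : ∀ k, 0 ≤ c k) (hs : Summable fun k => a (k + 1)) (hA : ∑' k, a (k + 1) < 1) :
    Summable (fun k => c (k + 1)) ∧
      ∑' k, c (k + 1) ≤ (∑' k, a (k + 1)) / (1 - ∑' k, a (k + 1)) := by
  have hpart (n : ℕ) : ∑ k ∈ range n, c (k + 1) ≤ (∑' k, a (k + 1)) / (1 - ∑' k, a (k + 1)) := by
    rw [← sum_Icc_one_eq_sum_range]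
    refine h.sum_Icc_le_div hc (fun n => ?_) hA n
    rw [sum_Icc_one_eq_sum_range]
    exact hs.sum_le_tsum _ fun k _ => ha _
  exact ⟨summable_of_sum_range_le (fun _ => hc _) hpart,
    Real.tsum_le_of_sum_range_le (fun _ => hc _) hpart⟩

end IsRenewalSubsolution

section ExpMoment

variable {a : ℕ → ℝ}

lemma mul_exp_le_mul_exp (ha : ∀ k, 0 ≤ a k) {s t : ℝ} (hst : s ≤ t) (k : ℕ) :
    a (k + 1) * exp (s * (k + 1)) ≤ a (k + 1) * exp (t * (k + 1)) :=
  mul_le_mul_of_nonneg_left (exp_le_exp.2 (mul_le_mul_of_nonneg_right hst (by positivity))) (ha _)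

lemma summable_mul_exp_of_le (ha : ∀ k, 0 ≤ a k) {s t : ℝ}
    (ht : Summable fun k : ℕ => a (k + 1) * exp (t * (k + 1))) (hst : s ≤ t) :
    Summable fun k : ℕ => a (k + 1) * exp (s * (k + 1)) :=
  ht.of_nonneg_of_le (fun _ => mul_nonneg (ha _) (exp_pos _).le) (mul_exp_le_mul_exp ha hst)

lemma tsum_mul_exp_le_of_le (ha : ∀ k, 0 ≤ a k) {s t : ℝ}
    (ht : Summable fun k : ℕ => a (k + 1) * exp (t * (k + 1))) (hst : s ≤ t) :
    ∑' k : ℕ, a (k + 1) * exp (s * (k + 1)) ≤ ∑' k : ℕ, a (k + 1) * exp (t * (k + 1)) :=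
  (summable_mul_exp_of_le ha ht hst).tsum_le_tsum (mul_exp_le_mul_exp ha hst) ht

lemma tendsto_tsum_mul_exp_nhds_zero (ha : ∀ k, 0 ≤ a k) {t₀ : ℝ} (ht₀ : 0 < t₀)
    (hA : Summable fun k : ℕ => a (k + 1) * exp (t₀ * (k + 1))) :
    Tendsto (fun t => ∑' k : ℕ, a (k + 1) * exp (t * (k + 1))) (𝓝 0) (𝓝 (∑' k, a (k + 1))) := by
  have hlim := tendsto_tsum_of_dominated_convergence (𝓕 := 𝓝 (0 : ℝ))
    (f := fun t k => a (k + 1) * exp (t * (k + 1))) hA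
    (fun _ => (Continuous.tendsto (by fun_prop) 0))
    (by
      filter_upwards [Iic_mem_nhds ht₀] with t ht k
      rw [norm_of_nonneg (mul_nonneg (ha _) (exp_pos _).le)]
      exact mul_exp_le_mul_exp ha ht k)
  simpa using hlim

end ExpMoment

theorem renewal_exponential_bound_general (a c : ℕ → ℝ)
    (ha : ∀ k, 0 ≤ a k) (hcpos : ∀ k, 0 ≤ c k)
    (hlt1 : (∑' k : ℕ, a (k + 1)) < 1)
    (hc1 : c 1 ≤ a 1)
    (hrec : ∀ m : ℕ, 2 ≤ m →
      c m ≤ a m + ∑ k ∈ Finset.Icc 1 (m - 1), a (m - k) * c k)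
    (t₀ : ℝ) (ht₀ : 0 < t₀)
    (hA : Summable (fun k : ℕ => a (k + 1) * Real.exp (t₀ * (k + 1)))) :
    ∃ t₁ : ℝ, 0 < t₁ ∧ ∀ t : ℝ, 0 < t → t ≤ t₁ →
      Summable (fun k : ℕ => a (k + 1) * Real.exp (t * (k + 1))) ∧
      (∑' k : ℕ, a (k + 1) * Real.exp (t * (k + 1))) < 1 ∧
      Summable (fun k : ℕ => c (k + 1) * Real.exp (t * (k + 1))) ∧
      (∑' k : ℕ, c (k + 1) * Real.exp (t * (k + 1))) ≤
        (∑' k : ℕ, a (k + 1) * Real.exp (t * (k + 1))) /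
          (1 - ∑' k : ℕ, a (k + 1) * Real.exp (t * (k + 1))) := by
  obtain ⟨t₁, hA₁, ht₁, ht₁₀⟩ :
      ∃ t₁, ∑' k : ℕ, a (k + 1) * exp (t₁ * (k + 1)) < 1 ∧ t₁ ∈ Set.Ioc 0 t₀ :=
    ((tendsto_tsum_mul_exp_nhds_zero ha ht₀ hA).mono_left nhdsWithin_le_nhds
      |>.eventually_lt_const hlt1 |>.and (Ioc_mem_nhdsGT ht₀)).exists
  refine ⟨t₁, ht₁, fun t ht htt₁ => ?_⟩
  have hA_t := summable_mul_exp_of_le ha hA (htt₁.trans ht₁₀)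
  have hA_t_lt : ∑' k : ℕ, a (k + 1) * exp (t * (k + 1)) < 1 :=
    (tsum_mul_exp_le_of_le ha (summable_mul_exp_of_le ha hA ht₁₀) htt₁).trans_lt hA₁
  have hC_t := ((isRenewalSubsolution_of_le hc1 hrec).mul_exp t).summable_and_tsum_le
    (fun k => mul_nonneg (ha k) (exp_pos _).le) (fun k => mul_nonneg (hcpos k) (exp_pos _).le)
  simp only [Nat.cast_succ] at hC_t
  exact ⟨hA_t, hA_t_lt, hC_t hA_t hA_t_lt⟩

/-- Renewal-type inequality, exponential weights: if `∑ a_k < 1`, `c_1 ≤ a_1` and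
`c_m ≤ a_m + ∑_{k=1}^{m-1} a_{m-k} c_k`, and `𝒜(t₀) = ∑ a_k e^{t₀ k} < ∞` for some
`t₀ > 0`, then for all sufficiently small `t > 0`, `𝒜(t) < 1` and
`𝒞(t) = ∑ c_k e^{tk} ≤ 𝒜(t)/(1 - 𝒜(t))`. -/
theorem renewal_exponential_bound (a c : ℕ → ℝ)
    (ha : ∀ k, 0 ≤ a k) (hcpos : ∀ k, 0 ≤ c k)
    (hsum : Summable (fun k : ℕ => a (k + 1)))
    (hlt1 : (∑' k : ℕ, a (k + 1)) < 1)
    (hc1 : c 1 ≤ a 1)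
    (hrec : ∀ m : ℕ, 2 ≤ m →
      c m ≤ a m + ∑ k ∈ Finset.Icc 1 (m - 1), a (m - k) * c k)
    (t₀ : ℝ) (ht₀ : 0 < t₀)
    (hA : Summable (fun k : ℕ => a (k + 1) * Real.exp (t₀ * (k + 1)))) :
    ∃ t₁ : ℝ, 0 < t₁ ∧ ∀ t : ℝ, 0 < t → t ≤ t₁ →
      Summable (fun k : ℕ => a (k + 1) * Real.exp (t * (k + 1))) ∧
      (∑' k : ℕ, a (k + 1) * Real.exp (t * (k + 1))) < 1 ∧
      Summable (fun k : ℕ => c (k + 1) * Real.exp (t * (k + 1))) ∧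
      (∑' k : ℕ, c (k + 1) * Real.exp (t * (k + 1))) ≤
        (∑' k : ℕ, a (k + 1) * Real.exp (t * (k + 1))) /
          (1 - ∑' k : ℕ, a (k + 1) * Real.exp (t * (k + 1))) :=
  renewal_exponential_bound_general a c ha hcpos hlt1 hc1 hrec t₀ ht₀ hA
end

section
/- Let w = (F, r, A) be a configuration of particles (A a nonempty subset of ℤ × {1,…,a}, F : A → ℤ with F(x,i) ≤ r), and let each particle perform an independent continuous-time simple symmetric random walk (F_s(x,i))_{s≥0} with jump rate 2 started at F(x,i). Fix θ > 0 and γ > 0 and set g_γ(θ) := γθ − 2(cosh θ − 1). Then for all t ≥ 0, P( sup_{(x,i) ∈ A} sup_{0 ≤ s ≤ t} F_s(x,i) ≥ r + γt ) ≤ f_θ(w) · exp(−g_γ(θ)·t), where f_θ(w) := ∑_{(x,i) ∈ A} exp(θ(F(x,i) − r)). -/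
open MeasureTheory ProbabilityTheory

/-- `ζ` is a continuous-time simple symmetric random walk on ℤ with total jump rate 2
started at 0: it is realized as `ζ s ω = X (N s ω) ω` where `X` is a discrete-time
simple symmetric random walk and `N` an independent rate-2 Poisson process. -/
def IsSSRW {Ω : Type} [MeasurableSpace Ω] (P : Measure Ω)
    (ζ : ℝ → Ω → ℤ) : Prop :=
  ∃ (X : ℕ → Ω → ℤ) (N : ℝ → Ω → ℕ),
    (∀ n, Measurable (X n)) ∧ (∀ t, Measurable (N t)) ∧
    (∀ ω, X 0 ω = 0) ∧ (∀ ω, N 0 ω = 0) ∧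
    (∀ ω, Monotone fun t => N t ω) ∧
    iIndepFun (fun n ω => X (n + 1) ω - X n ω) P ∧
    (∀ n : ℕ,
      P {ω | X (n + 1) ω - X n ω = 1} = ENNReal.ofReal (1 / 2) ∧
      P {ω | X (n + 1) ω - X n ω = -1} = ENNReal.ofReal (1 / 2)) ∧
    (∀ s t : ℝ, 0 ≤ s → s ≤ t → ∀ k : ℕ,
      P {ω | N t ω - N s ω = k} =
        ENNReal.ofReal (Real.exp (-(2 * (t - s))) * (2 * (t - s)) ^ k /
          (Nat.factorial k))) ∧
    (∀ u : ℕ → ℝ, Monotone u → 0 ≤ u 0 →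
      iIndepFun
        (fun i ω => N (u (i + 1)) ω - N (u i) ω) P) ∧
    IndepFun (fun ω => (fun t : ℝ => N t ω)) (fun ω => (fun n : ℕ => X n ω)) P ∧
    (∀ s ω, ζ s ω = X (N s ω) ω)

/-!
For one particle, write its walk as `X ∘ N` with `X` a discrete fair walk and `N` an independent
rate-2 Poisson process. Since `E e^{θ D} = cosh θ ≥ 1` for a fair `±1` step `D`, the process
`e^{θ X_n}` is a submartingale, and Doob's maximal inequality gives
`P(max_{n ≤ k} X_n ≥ c) ≤ e^{-θ c} cosh^k θ`. Averaging over `N_t ~ Poisson(2t)` turns `cosh^k θ`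
into `e^{2t (cosh θ - 1)}`. Taking `c = r + γ t - F(x,i)` and summing over the particles gives
`f_θ(w) e^{-g_γ(θ) t}`.
-/

open scoped ENNReal

theorem lintegral_maximal_ineq {Ω : Type*} {mΩ : MeasurableSpace Ω} {μ : Measure Ω}
    (𝓕 : Filtration ℕ mΩ) {Y : ℕ → Ω → ℝ≥0∞} (hY : ∀ n, Measurable[𝓕 n] (Y n))
    (hsub : ∀ n k, n ≤ k → ∀ S, MeasurableSet[𝓕 n] S →
      ∫⁻ ω in S, Y n ω ∂μ ≤ ∫⁻ ω in S, Y k ω ∂μ)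
    (ε : ℝ≥0∞) (k : ℕ) :
    ε * μ {ω | ∃ n ≤ k, ε ≤ Y n ω} ≤ ∫⁻ ω, Y k ω ∂μ := by
  set above : ℕ → Set Ω := fun n => {ω | ε ≤ Y n ω}
  -- `disjointed above n` is the event that `Y` first reaches `ε` at time `n`.
  have habove : ∀ m n, m ≤ n → MeasurableSet[𝓕 n] (above m) := fun m n hmn =>
    measurableSet_le measurable_const ((hY m).mono (𝓕.mono hmn) le_rfl)
  have hfirst : ∀ n, MeasurableSet[𝓕 n] (disjointed above n) := fun n => by
    rw [disjointed_eq_inter_compl]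
    exact (habove n n le_rfl).inter
      (.biInter (Set.to_countable _) fun m hm => (habove m n (le_of_lt hm)).compl)
  have hfirst' : ∀ n ∈ Finset.Iic k, MeasurableSet (disjointed above n) :=
    fun n _ => 𝓕.le n _ (hfirst n)
  have hdisj : Set.PairwiseDisjoint ↑(Finset.Iic k) (disjointed above) :=
    (disjoint_disjointed above).set_pairwise _
  have hE : {ω | ∃ n ≤ k, ε ≤ Y n ω} = ⋃ n ∈ Finset.Iic k, disjointed above n := by
    rw [biUnion_Iic_disjointed, partialSups_eq_biSup]
    ext ω
    simp [above]
  calc ε * μ {ω | ∃ n ≤ k, ε ≤ Y n ω}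
      = ∑ n ∈ Finset.Iic k, ε * μ (disjointed above n) := by
        rw [hE, measure_biUnion_finset hdisj hfirst', Finset.mul_sum]
    _ ≤ ∑ n ∈ Finset.Iic k, ∫⁻ ω in disjointed above n, Y n ω ∂μ := by
        gcongr with n
        rw [← setLIntegral_const]
        exact setLIntegral_mono ((hY n).mono (𝓕.le n) le_rfl)
          fun ω hω => disjointed_subset above n hω
    _ ≤ ∑ n ∈ Finset.Iic k, ∫⁻ ω in disjointed above n, Y k ω ∂μ :=
        Finset.sum_le_sum fun n hn => hsub n k (Finset.mem_Iic.mp hn) _ (hfirst n)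
    _ = ∫⁻ ω in ⋃ n ∈ Finset.Iic k, disjointed above n, Y k ω ∂μ :=
        (lintegral_biUnion_finset hdisj hfirst' _).symm
    _ ≤ ∫⁻ ω, Y k ω ∂μ := setLIntegral_le_lintegral _ _

noncomputable def expWeight (θ : ℝ) (z : ℤ) : ℝ≥0∞ := ENNReal.ofReal (Real.exp (θ * z))

lemma measurable_expWeight (θ : ℝ) : Measurable (expWeight θ) := measurable_of_countable _

lemma expWeight_add (θ : ℝ) (a b : ℤ) :
    expWeight θ (a + b) = expWeight θ a * expWeight θ b := by
  rw [expWeight, expWeight, expWeight, ← ENNReal.ofReal_mul (Real.exp_nonneg _), ← Real.exp_add]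
  push_cast
  ring_nf

lemma expWeight_sum {ι : Type*} (θ : ℝ) (s : Finset ι) (z : ι → ℤ) :
    expWeight θ (∑ i ∈ s, z i) = ∏ i ∈ s, expWeight θ (z i) := by
  simp only [expWeight, Int.cast_sum, Finset.mul_sum, Real.exp_sum]
  exact ENNReal.ofReal_prod_of_nonneg fun i _ => Real.exp_nonneg _

section Walk

variable {Ω : Type*} {mΩ : MeasurableSpace Ω} {P : Measure Ω}

lemma lintegral_expWeight_of_fair [IsProbabilityMeasure P] {D : Ω → ℤ} (hD : Measurable D)
    (h₁ : P {ω | D ω = 1} = ENNReal.ofReal (1 / 2))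
    (h₂ : P {ω | D ω = -1} = ENNReal.ofReal (1 / 2)) (θ : ℝ) :
    ∫⁻ ω, expWeight θ (D ω) ∂P = ENNReal.ofReal (Real.cosh θ) := by
  have hD₁ : MeasurableSet {ω | D ω = 1} := hD (measurableSet_singleton 1)
  have hD₂ : MeasurableSet {ω | D ω = -1} := hD (measurableSet_singleton (-1))
  have hdisj : Disjoint {ω | D ω = 1} {ω | D ω = -1} :=
    Set.disjoint_left.mpr fun ω h h' => by simp_all
  have hcompl : P ({ω | D ω = 1} ∪ {ω | D ω = -1})ᶜ = 0 := by
    rw [prob_compl_eq_zero_iff (hD₁.union hD₂), measure_union hdisj hD₂, h₁, h₂,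
      ← ENNReal.ofReal_add (by norm_num) (by norm_num)]
    norm_num
  rw [← lintegral_add_compl _ (hD₁.union hD₂), setLIntegral_measure_zero _ _ hcompl, add_zero,
    lintegral_union hD₂ hdisj,
    setLIntegral_congr_fun hD₁ (g := fun _ => expWeight θ 1) fun ω h => by rw [h],
    setLIntegral_congr_fun hD₂ (g := fun _ => expWeight θ (-1)) fun ω h => by rw [h],
    setLIntegral_const, setLIntegral_const, h₁, h₂, expWeight, expWeight,
    ← ENNReal.ofReal_mul (Real.exp_nonneg _), ← ENNReal.ofReal_mul (Real.exp_nonneg _),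
    ← ENNReal.ofReal_add (by positivity) (by positivity), Real.cosh_eq]
  congr 1
  simp only [Int.cast_one, Int.cast_neg, mul_one, mul_neg]
  ring

lemma lintegral_expWeight_sum_of_iIndepFun {ι : Type*} {D : ι → Ω → ℤ}
    (hD : ∀ i, Measurable (D i)) (hind : iIndepFun D P) (θ : ℝ) (s : Finset ι) :
    ∫⁻ ω, expWeight θ (∑ i ∈ s, D i ω) ∂P = ∏ i ∈ s, ∫⁻ ω, expWeight θ (D i ω) ∂P := by
  simp_rw [expWeight_sum]
  exact lintegral_prod_eq_prod_lintegral_of_indepFun s _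
    (hind.comp (fun _ => expWeight θ) fun _ => measurable_expWeight θ)
    fun i => (measurable_expWeight θ).comp (hD i)

variable {D : ℕ → Ω → ℤ}

def walkFiltration (D : ℕ → Ω → ℤ) (hD : ∀ i, Measurable (D i)) : Filtration ℕ mΩ where
  seq n := ⨆ i ∈ Set.Iio n, MeasurableSpace.comap (D i) inferInstance
  mono' _ _ hnm := biSup_mono fun _ hi => lt_of_lt_of_le hi hnm
  le' _ := iSup₂_le fun i _ => (hD i).comap_le

lemma measurable_iSup_comap_sum {s : Set ℕ} {t : Finset ℕ} (hts : ↑t ⊆ s) :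
    Measurable[⨆ i ∈ s, MeasurableSpace.comap (D i) inferInstance] fun ω => ∑ i ∈ t, D i ω :=
  Finset.measurable_sum _ fun i hi =>
    (Measurable.of_comap_le le_rfl).mono (le_iSup₂_of_le i (hts hi) le_rfl) le_rfl

lemma measurable_walkFiltration_partialSum (hD : ∀ i, Measurable (D i)) (n : ℕ) :
    Measurable[walkFiltration D hD n] fun ω => ∑ i ∈ Finset.range n, D i ω :=
  measurable_iSup_comap_sum (Finset.coe_range n).subset

lemma setLIntegral_expWeight_partialSum_le (hD : ∀ i, Measurable (D i)) (hind : iIndepFun D P)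
    {θ : ℝ} (hmgf : ∀ i, 1 ≤ ∫⁻ ω, expWeight θ (D i ω) ∂P) {n k : ℕ} (hnk : n ≤ k) {S : Set Ω}
    (hS : MeasurableSet[walkFiltration D hD n] S) :
    ∫⁻ ω in S, expWeight θ (∑ i ∈ Finset.range n, D i ω) ∂P ≤
      ∫⁻ ω in S, expWeight θ (∑ i ∈ Finset.range k, D i ω) ∂P := by
  set past : Ω → ℝ≥0∞ := fun ω => expWeight θ (∑ i ∈ Finset.range n, D i ω)
  set future : Ω → ℝ≥0∞ := fun ω => expWeight θ (∑ i ∈ Finset.Ico n k, D i ω)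
  have hindep : Indep (walkFiltration D hD n)
      (⨆ i ∈ Set.Ico n k, MeasurableSpace.comap (D i) inferInstance) P :=
    indep_iSup_of_disjoint (fun i => (hD i).comap_le) ((iIndepFun_iff_iIndep _ _ _).mp hind)
      (Set.disjoint_left.mpr fun _ hi hi' => not_le.mpr hi hi'.1)
  have hpast : Measurable[walkFiltration D hD n] (S.indicator past) :=
    ((measurable_expWeight θ).comp (measurable_walkFiltration_partialSum hD n)).indicator hS
  have hfuture : Measurable[⨆ i ∈ Set.Ico n k, MeasurableSpace.comap (D i) inferInstance]
      future :=
    (measurable_expWeight θ).comp (measurable_iSup_comap_sum (by simp))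
  have hfuture_ge : 1 ≤ ∫⁻ ω, future ω ∂P := by
    rw [lintegral_expWeight_sum_of_iIndepFun hD hind]
    exact Finset.one_le_prod' fun i _ => hmgf i
  calc ∫⁻ ω in S, past ω ∂P
      ≤ (∫⁻ ω, S.indicator past ω ∂P) * ∫⁻ ω, future ω ∂P := by
        rw [lintegral_indicator ((walkFiltration D hD).le n _ hS)]
        exact le_mul_of_one_le_right' hfuture_ge
    _ = ∫⁻ ω, S.indicator past ω * future ω ∂P :=
        (lintegral_mul_eq_lintegral_mul_lintegral_of_independent_measurableSpace
          ((walkFiltration D hD).le n) (iSup₂_le fun i _ => (hD i).comap_le) hindep hpast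
          hfuture).symm
    _ = ∫⁻ ω in S, expWeight θ (∑ i ∈ Finset.range k, D i ω) ∂P := by
        rw [← lintegral_indicator ((walkFiltration D hD).le n _ hS)]
        refine lintegral_congr fun ω => ?_
        simp only [past, future, ← Finset.sum_range_add_sum_Ico _ hnk, expWeight_add,
          Set.indicator_mul_left]

lemma measure_exists_partialSum_ge_le [IsProbabilityMeasure P] (hD : ∀ i, Measurable (D i))
    (hind : iIndepFun D P)
    (hfair : ∀ i, P {ω | D i ω = 1} = ENNReal.ofReal (1 / 2) ∧
      P {ω | D i ω = -1} = ENNReal.ofReal (1 / 2))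
    {θ : ℝ} (hθ : 0 < θ) (c : ℝ) (k : ℕ) :
    P {ω | ∃ n ≤ k, c ≤ ((∑ i ∈ Finset.range n, D i ω : ℤ) : ℝ)} ≤
      ENNReal.ofReal (Real.exp (-(θ * c)) * Real.cosh θ ^ k) := by
  have hmgf : ∀ i, ∫⁻ ω, expWeight θ (D i ω) ∂P = ENNReal.ofReal (Real.cosh θ) :=
    fun i => lintegral_expWeight_of_fair (hD i) (hfair i).1 (hfair i).2 θ
  have hdoob := lintegral_maximal_ineq (μ := P) (walkFiltration D hD)
    (Y := fun n ω => expWeight θ (∑ i ∈ Finset.range n, D i ω))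
    (fun n => (measurable_expWeight θ).comp (measurable_walkFiltration_partialSum hD n))
    (fun n k hnk S hS => setLIntegral_expWeight_partialSum_le hD hind
      (fun i => (hmgf i).symm ▸ ENNReal.one_le_ofReal.mpr (Real.one_le_cosh θ)) hnk hS)
    (ENNReal.ofReal (Real.exp (θ * c))) k
  rw [lintegral_expWeight_sum_of_iIndepFun hD hind, Finset.prod_congr rfl fun i _ => hmgf i,
    Finset.prod_const, Finset.card_range] at hdoob
  have hcrossing : {ω | ∃ n ≤ k, c ≤ ((∑ i ∈ Finset.range n, D i ω : ℤ) : ℝ)} ⊆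
      {ω | ∃ n ≤ k, ENNReal.ofReal (Real.exp (θ * c)) ≤
        expWeight θ (∑ i ∈ Finset.range n, D i ω)} :=
    fun ω ⟨n, hn, hc⟩ => ⟨n, hn, ENNReal.ofReal_le_ofReal
      (Real.exp_le_exp.mpr (mul_le_mul_of_nonneg_left hc hθ.le))⟩
  calc P {ω | ∃ n ≤ k, c ≤ ((∑ i ∈ Finset.range n, D i ω : ℤ) : ℝ)}
      ≤ ENNReal.ofReal (Real.exp (-(θ * c))) * (ENNReal.ofReal (Real.exp (θ * c)) *
          P {ω | ∃ n ≤ k, ENNReal.ofReal (Real.exp (θ * c)) ≤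
            expWeight θ (∑ i ∈ Finset.range n, D i ω)}) := by
        rw [← mul_assoc, ← ENNReal.ofReal_mul (Real.exp_nonneg _), ← Real.exp_add,
          neg_add_cancel, Real.exp_zero, ENNReal.ofReal_one, one_mul]
        exact measure_mono hcrossing
    _ ≤ ENNReal.ofReal (Real.exp (-(θ * c))) * ENNReal.ofReal (Real.cosh θ) ^ k := by gcongr
    _ = ENNReal.ofReal (Real.exp (-(θ * c)) * Real.cosh θ ^ k) := by
        rw [ENNReal.ofReal_mul (Real.exp_nonneg _), ENNReal.ofReal_pow (Real.cosh_pos θ).le]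

end Walk

lemma hasSum_poisson_mul_pow (ℓ x : ℝ) :
    HasSum (fun k : ℕ => Real.exp (-ℓ) * ℓ ^ k / k.factorial * x ^ k)
      (Real.exp (ℓ * (x - 1))) := by
  have h := (NormedSpace.expSeries_div_hasSum_exp (ℓ * x)).mul_left (Real.exp (-ℓ))
  rw [← Real.exp_eq_exp_ℝ, ← Real.exp_add, show -ℓ + ℓ * x = ℓ * (x - 1) by ring] at h
  have hterm : (fun k : ℕ => Real.exp (-ℓ) * ℓ ^ k / k.factorial * x ^ k) =
      fun k => Real.exp (-ℓ) * ((ℓ * x) ^ k / k.factorial) := by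
    funext k
    rw [mul_pow]
    ring
  rw [hterm]
  exact h

lemma IsSSRW.measure_exists_ge_le {Ω : Type} [MeasurableSpace Ω] {P : Measure Ω}
    [IsProbabilityMeasure P] {ζ : ℝ → Ω → ℤ} (h : IsSSRW P ζ) {θ : ℝ} (hθ : 0 < θ) (c : ℝ)
    {t : ℝ} (ht : 0 ≤ t) :
    P {ω | ∃ s, 0 ≤ s ∧ s ≤ t ∧ c ≤ (ζ s ω : ℝ)} ≤
      ENNReal.ofReal (Real.exp (-(θ * c)) * Real.exp (2 * (Real.cosh θ - 1) * t)) := by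
  obtain ⟨X, N, hX, -, hX0, hN0, hNmono, hind, hfair, hPois, -, hNX, hζ⟩ := h
  set M : ℕ → Set Ω := fun k => {ω | ∃ n ≤ k, c ≤ (X n ω : ℝ)}
  have hM : ∀ k, P (M k) ≤ ENNReal.ofReal (Real.exp (-(θ * c)) * Real.cosh θ ^ k) := by
    have hX_sum : ∀ n ω, ∑ i ∈ Finset.range n, (X (i + 1) ω - X i ω) = X n ω := fun n ω => by
      rw [Finset.sum_range_sub (fun i => X i ω), hX0, sub_zero]
    intro k
    simpa only [hX_sum] using measure_exists_partialSum_ge_le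
      (D := fun i ω => X (i + 1) ω - X i ω) (fun i => (hX (i + 1)).sub (hX i)) hind hfair hθ c k
  have hNt : ∀ k : ℕ, P {ω | N t ω = k} =
      ENNReal.ofReal (Real.exp (-(2 * t)) * (2 * t) ^ k / k.factorial) := by
    intro k
    simpa [hN0] using hPois 0 t le_rfl ht k
  have hsplit : ∀ k : ℕ, P ({ω | N t ω = k} ∩ M k) = P {ω | N t ω = k} * P (M k) := fun k =>
    hNX.measure_inter_preimage_eq_mul {g | g t = k} {x | ∃ n ≤ k, c ≤ (x n : ℝ)}
      (by measurability) (by measurability)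
  have hcover : {ω | ∃ s, 0 ≤ s ∧ s ≤ t ∧ c ≤ (ζ s ω : ℝ)} ⊆
      ⋃ k : ℕ, {ω | N t ω = k} ∩ M k := by
    rintro ω ⟨s, -, hst, hc⟩
    exact Set.mem_iUnion.mpr ⟨N t ω, rfl, N s ω, hNmono ω hst, hζ s ω ▸ hc⟩
  have hsum := (hasSum_poisson_mul_pow (2 * t) (Real.cosh θ)).mul_left (Real.exp (-(θ * c)))
  calc P {ω | ∃ s, 0 ≤ s ∧ s ≤ t ∧ c ≤ (ζ s ω : ℝ)}
      ≤ ∑' k : ℕ, P ({ω | N t ω = k} ∩ M k) := (measure_mono hcover).trans (measure_iUnion_le _)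
    _ ≤ ∑' k : ℕ, ENNReal.ofReal (Real.exp (-(θ * c)) *
          (Real.exp (-(2 * t)) * (2 * t) ^ k / k.factorial * Real.cosh θ ^ k)) := by
        refine ENNReal.tsum_le_tsum fun k => ?_
        rw [hsplit, hNt]
        refine (mul_le_mul_right (hM k) _).trans_eq ?_
        rw [← ENNReal.ofReal_mul (by positivity)]
        ring_nf
    _ = ENNReal.ofReal (Real.exp (-(θ * c)) * Real.exp (2 * (Real.cosh θ - 1) * t)) := by
        rw [← ENNReal.ofReal_tsum_of_nonneg (fun k => by positivity) hsum.summable, hsum.tsum_eq]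
        ring_nf

theorem remote_particles_bound_general
    {Ω : Type} [mΩ : MeasurableSpace Ω] (P : Measure Ω) [IsProbabilityMeasure P]
    (A : Set (ℤ × ℕ))
    (F : ℤ × ℕ → ℤ) (r : ℤ)
    (ζ : ℤ × ℕ → ℝ → Ω → ℤ) (hζ : ∀ p, IsSSRW P (ζ p))
    (θ γ : ℝ) (hθ : 0 < θ)
    (hsum : Summable (fun p : A => Real.exp (θ * ((F p : ℝ) - (r : ℝ))))) :
    ∀ t : ℝ, 0 ≤ t →
      P {ω | ∃ p ∈ A, ∃ s : ℝ, 0 ≤ s ∧ s ≤ t ∧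
          (r : ℝ) + γ * t ≤ (F p : ℝ) + (ζ p s ω : ℝ)} ≤
        ENNReal.ofReal
          ((∑' p : A, Real.exp (θ * ((F p : ℝ) - (r : ℝ)))) *
            Real.exp (-(γ * θ - 2 * (Real.cosh θ - 1)) * t)) := by
  intro t ht
  set C := Real.exp (-(γ * θ - 2 * (Real.cosh θ - 1)) * t)
  have hparticle : ∀ p : A, P {ω | ∃ s, 0 ≤ s ∧ s ≤ t ∧ r + γ * t - F p ≤ (ζ p s ω : ℝ)} ≤
      ENNReal.ofReal (Real.exp (θ * ((F p : ℝ) - r)) * C) := fun p =>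
    ((hζ p).measure_exists_ge_le hθ _ ht).trans_eq <| by
      rw [← Real.exp_add, ← Real.exp_add]
      ring_nf
  calc P {ω | ∃ p ∈ A, ∃ s : ℝ, 0 ≤ s ∧ s ≤ t ∧ (r : ℝ) + γ * t ≤ (F p : ℝ) + (ζ p s ω : ℝ)}
      ≤ ∑' p : A, P {ω | ∃ s, 0 ≤ s ∧ s ≤ t ∧ r + γ * t - F p ≤ (ζ p s ω : ℝ)} := by
        refine (measure_mono ?_).trans (measure_iUnion_le _)
        rintro ω ⟨p, hp, s, hs, hst, hreach⟩
        exact Set.mem_iUnion.mpr ⟨⟨p, hp⟩, s, hs, hst, by linarith⟩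
    _ ≤ ∑' p : A, ENNReal.ofReal (Real.exp (θ * ((F p : ℝ) - r)) * C) :=
        ENNReal.tsum_le_tsum hparticle
    _ = ENNReal.ofReal ((∑' p : A, Real.exp (θ * ((F p : ℝ) - r))) * C) := by
        rw [← tsum_mul_right, ENNReal.ofReal_tsum_of_nonneg (fun p => by positivity)
          (hsum.mul_right C)]

/-- Lemma bounding the probability that some particle of a configuration `w = (F, r, A)`
of independent rate-2 simple symmetric random walks exceeds `r + γ t` by time `t`:
`P(sup_{(x,i) ∈ A} sup_{0 ≤ s ≤ t} F_s(x,i) ≥ r + γ t) ≤ f_θ(w) exp(−g_γ(θ) t)`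
with `g_γ(θ) = γθ − 2(cosh θ − 1)` and `f_θ(w) = ∑_{(x,i) ∈ A} exp(θ(F(x,i) − r))`. -/
theorem remote_particles_bound
    {Ω : Type} [mΩ : MeasurableSpace Ω] (P : Measure Ω) [IsProbabilityMeasure P]
    (a : ℕ) (ha : 1 ≤ a)
    (A : Set (ℤ × ℕ)) (hAne : A.Nonempty) (hAa : ∀ p ∈ A, p.2 < a)
    (F : ℤ × ℕ → ℤ) (r : ℤ) (hF : ∀ p ∈ A, F p ≤ r)
    (ζ : ℤ × ℕ → ℝ → Ω → ℤ) (hζ : ∀ p, IsSSRW P (ζ p))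
    (hindep : iIndepFun
      (fun (p : ℤ × ℕ) ω => (fun s : ℝ => ζ p s ω)) P)
    (θ γ : ℝ) (hθ : 0 < θ) (hγ : 0 < γ)
    (hsum : Summable (fun p : A => Real.exp (θ * ((F p : ℝ) - (r : ℝ))))) :
    ∀ t : ℝ, 0 ≤ t →
      P {ω | ∃ p ∈ A, ∃ s : ℝ, 0 ≤ s ∧ s ≤ t ∧
          (r : ℝ) + γ * t ≤ (F p : ℝ) + (ζ p s ω : ℝ)} ≤
        ENNReal.ofReal
          ((∑' p : A, Real.exp (θ * ((F p : ℝ) - (r : ℝ)))) *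
            Real.exp (-(γ * θ - 2 * (Real.cosh θ - 1)) * t)) :=
  remote_particles_bound_general (mΩ := mΩ) P A F r ζ hζ θ γ hθ hsum
end
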